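/- Let E be a finite-dimensional real inner product space, let φ : E → ℝ be continuously differentiable, let F : E → E be continuous, and let α : ℝ → ℝ be continuous, strictly monotonically increasing, with α(0) = 0. Suppose that for all y ∈ E, ⟨∇φ(y), F(y)⟩ ≤ −α(φ(y)). Then for every differentiable curve x : ℝ → E satisfying x'(t) = F(x(t)) for all t ≥ 0 and φ(x(0)) ≤ 0, we have φ(x(t)) ≤ 0 for all t ≥ 0. -/

import Mathlib

/-!
Along a solution, `v t = φ (x t)` satisfies `v' ≤ -α v < 0` wherever `v > 0`. Hence `v` can
never reach a level `ε > 0` from below, and letting `ε → 0` gives `v ≤ 0`.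
-/

open RealInnerProductSpace

theorem HasGradientAt.comp_hasDerivAt {E : Type*} [NormedAddCommGroup E] [InnerProductSpace ℝ E]
    [CompleteSpace E] {φ : E → ℝ} {g : E} {x : ℝ → E} {x' : E} {s : ℝ}
    (hφ : HasGradientAt φ g (x s)) (hx : HasDerivAt x x' s) :
    HasDerivAt (φ ∘ x) ⟪g, x'⟫ s := by
  simpa using hφ.hasFDerivAt.comp_hasDerivAt s hx

theorem nonpos_of_hasDerivAt_neg_of_pos {v v' : ℝ → ℝ} {a t : ℝ}
    (hv : ∀ s, a ≤ s → HasDerivAt v (v' s) s) (hneg : ∀ s, a ≤ s → 0 < v s → v' s < 0)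
    (ha : v a ≤ 0) (ht : a ≤ t) : v t ≤ 0 := by
  refine le_of_forall_pos_le_add fun ε hε => ?_
  have hbarrier := image_le_of_deriv_right_lt_deriv_boundary (b := t) (B := fun _ => ε) (B' := 0)
    (fun s hs => (hv s hs.1).continuousAt.continuousWithinAt)
    (fun s hs => (hv s hs.1).hasDerivWithinAt) (ha.trans hε.le) (fun _ => hasDerivAt_const _ _)
    (fun s hs hvs => hneg s hs.1 (hvs ▸ hε))
  simpa using hbarrier ⟨ht, le_rfl⟩

theorem class_kappa_cbf_forward_invariance_general
    {E : Type*} [NormedAddCommGroup E] [InnerProductSpace ℝ E]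
    [FiniteDimensional ℝ E]
    (φ : E → ℝ) (hφ : ContDiff ℝ 1 φ)
    (F : E → E)
    (α : ℝ → ℝ) (hαmono : StrictMono α) (hα0 : α 0 = 0)
    (hdecr : ∀ y : E, ⟪gradient φ y, F y⟫ ≤ -α (φ y)) :
    ∀ x : ℝ → E, Differentiable ℝ x → (∀ t, 0 ≤ t → deriv x t = F (x t)) →
      φ (x 0) ≤ 0 → ∀ t, 0 ≤ t → φ (x t) ≤ 0 := by
  intro x hx hxF hx0 t ht
  have hφx (s : ℝ) : HasDerivAt (φ ∘ x) ⟪gradient φ (x s), deriv x s⟫ s :=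
    ((hφ.differentiable one_ne_zero).differentiableAt.hasGradientAt).comp_hasDerivAt
      (hx s).hasDerivAt
  refine nonpos_of_hasDerivAt_neg_of_pos (fun s _ => hφx s) (fun s hs hpos => ?_) hx0 ht
  calc ⟪gradient φ (x s), deriv x s⟫ = ⟪gradient φ (x s), F (x s)⟫ := by rw [hxF s hs]
    _ ≤ -α (φ (x s)) := hdecr (x s)
    _ < 0 := neg_neg_of_pos (hα0 ▸ hαmono hpos)

/-- Class-κ CBF forward invariance: if `φ` is `C¹`, `F` is continuous, `α` is a
class-κ function (continuous, strictly increasing, `α 0 = 0`), and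
`⟪∇φ(y), F(y)⟫ ≤ -α (φ y)` for all states `y`, then every differentiable
solution of `x' = F ∘ x` on `t ≥ 0` starting with `φ (x 0) ≤ 0` satisfies
`φ (x t) ≤ 0` for all `t ≥ 0`. -/
theorem class_kappa_cbf_forward_invariance
    {E : Type*} [NormedAddCommGroup E] [InnerProductSpace ℝ E]
    [FiniteDimensional ℝ E]
    (φ : E → ℝ) (hφ : ContDiff ℝ 1 φ)
    (F : E → E) (hF : Continuous F)
    (α : ℝ → ℝ) (hαc : Continuous α) (hαmono : StrictMono α) (hα0 : α 0 = 0)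
    (hdecr : ∀ y : E, ⟪gradient φ y, F y⟫ ≤ -α (φ y)) :
    ∀ x : ℝ → E, Differentiable ℝ x → (∀ t, 0 ≤ t → deriv x t = F (x t)) →
      φ (x 0) ≤ 0 → ∀ t, 0 ≤ t → φ (x t) ≤ 0 :=
  class_kappa_cbf_forward_invariance_general φ hφ F α hαmono hα0 hdecr
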